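/- arXiv:2507.14481 — 2 statements merged into one kernel-verified Lean document; each statement's English description precedes it below -/
import Mathlib

section
/- Let E be a real inner product space, L : E → ℝ → ℝ a parameterized loss, g : E → ℝ → E a parameterized gradient map, and β, K, G > 0 real numbers. Let η > 0, let δ : ℕ → ℝ be a monotonically nonincreasing sequence with values in [δ_min, δ_max], set Δ = δ_max − δ_min, and define x_{t+1} = x_t − η·g(x_t, δ_t) starting from x_0. Assume for every t: (i) for all x, y ∈ E, L(y, δ_t) ≤ L(x, δ_t) + ⟪g(x, δ_t), y − x⟫ + (β/2)‖y − x‖²; (ii) L(x_{t+1}, δ_{t+1}) ≤ L(x_{t+1}, δ_t) + K·|δ_t − δ_{t+1}|·‖x_{t+1} − x_t‖; (iii) ‖g(x, δ)‖ ≤ G for all x ∈ E and δ ∈ ℝ. Then for every T, L(x_T, δ_T) ≤ L(x_0, δ_0) − (η − βη²/2)·Σ_{t=0}^{T−1} ‖g(x_t, δ_t)‖² + K·η·G·Δ. -/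
open RealInnerProductSpace

/-- Telescoped E2H bound over `T` steps. -/
theorem e2h_telescoped_bound
    {E : Type*} [NormedAddCommGroup E] [InnerProductSpace ℝ E]
    (L : E → ℝ → ℝ) (g : E → ℝ → E) (β K G : ℝ)
    (hβ : 0 < β) (hK : 0 < K) (hG : 0 < G)
    (η : ℝ) (hη : 0 < η)
    (δ : ℕ → ℝ) (hmono : ∀ t : ℕ, δ (t + 1) ≤ δ t)
    (δmin δmax : ℝ) (hbound : ∀ t : ℕ, δmin ≤ δ t ∧ δ t ≤ δmax)
    (x : ℕ → E) (hupd : ∀ t : ℕ, x (t + 1) = x t - η • g (x t) (δ t))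
    (hsmooth : ∀ t : ℕ, ∀ a b : E,
      L b (δ t) ≤ L a (δ t) + ⟪g a (δ t), b - a⟫ + (β / 2) * ‖b - a‖ ^ 2)
    (hδchange : ∀ t : ℕ,
      L (x (t + 1)) (δ (t + 1)) ≤ L (x (t + 1)) (δ t)
        + K * |δ t - δ (t + 1)| * ‖x (t + 1) - x t‖)
    (hgrad : ∀ (a : E) (d : ℝ), ‖g a d‖ ≤ G) :
    ∀ T : ℕ,
      L (x T) (δ T) ≤ L (x 0) (δ 0)
        - (η - β * η ^ 2 / 2) * ∑ t ∈ Finset.range T, ‖g (x t) (δ t)‖ ^ 2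
        + K * η * G * (δmax - δmin) := by
  have key : ∀ t : ℕ,
      L (x (t + 1)) (δ (t + 1)) ≤ L (x t) (δ t)
        - (η - β * η ^ 2 / 2) * ‖g (x t) (δ t)‖ ^ 2
        + K * η * G * (δ t - δ (t + 1)) := by
    intro t
    set gt := g (x t) (δ t) with hgt
    have hdiff : x (t + 1) - x t = -(η • gt) := by rw [hupd t]; abel
    have h1 : L (x (t + 1)) (δ t) ≤ L (x t) (δ t)
        - (η - β * η ^ 2 / 2) * ‖gt‖ ^ 2 := by
      have := hsmooth t (x t) (x (t + 1))
      rw [hdiff] at this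
      have hinner : ⟪gt, -(η • gt)⟫ = -(η * ‖gt‖ ^ 2) := by
        rw [inner_neg_right, real_inner_smul_right, real_inner_self_eq_norm_sq]
      have hnorm : ‖-(η • gt)‖ ^ 2 = η ^ 2 * ‖gt‖ ^ 2 := by
        rw [norm_neg, norm_smul, Real.norm_eq_abs, mul_pow, sq_abs]
      rw [hinner, hnorm] at this
      calc L (x (t + 1)) (δ t) ≤ L (x t) (δ t) + -(η * ‖gt‖ ^ 2)
            + β / 2 * (η ^ 2 * ‖gt‖ ^ 2) := this
        _ = L (x t) (δ t) - (η - β * η ^ 2 / 2) * ‖gt‖ ^ 2 := by ring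
    have h2 : K * |δ t - δ (t + 1)| * ‖x (t + 1) - x t‖
        ≤ K * η * G * (δ t - δ (t + 1)) := by
      have habs : |δ t - δ (t + 1)| = δ t - δ (t + 1) :=
        abs_of_nonneg (sub_nonneg.2 (hmono t))
      have hn : ‖x (t + 1) - x t‖ ≤ η * G := by
        rw [hdiff, norm_neg, norm_smul, Real.norm_eq_abs, abs_of_pos hη]
        exact mul_le_mul_of_nonneg_left (hgrad _ _) hη.le
      rw [habs]
      calc K * (δ t - δ (t + 1)) * ‖x (t + 1) - x t‖
          ≤ K * (δ t - δ (t + 1)) * (η * G) := by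
            apply mul_le_mul_of_nonneg_left hn
            exact mul_nonneg hK.le (sub_nonneg.2 (hmono t))
        _ = K * η * G * (δ t - δ (t + 1)) := by ring
    calc L (x (t + 1)) (δ (t + 1))
        ≤ L (x (t + 1)) (δ t) + K * |δ t - δ (t + 1)| * ‖x (t + 1) - x t‖ :=
          hδchange t
      _ ≤ (L (x t) (δ t) - (η - β * η ^ 2 / 2) * ‖gt‖ ^ 2)
          + K * η * G * (δ t - δ (t + 1)) := add_le_add h1 h2
  have main : ∀ T : ℕ,
      L (x T) (δ T) ≤ L (x 0) (δ 0)
        - (η - β * η ^ 2 / 2) * ∑ t ∈ Finset.range T, ‖g (x t) (δ t)‖ ^ 2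
        + K * η * G * (δ 0 - δ T) := by
    intro T
    induction T with
    | zero => simp
    | succ T ih =>
      have := key T
      rw [Finset.sum_range_succ]
      nlinarith [this, ih]
  intro T
  have hle : δ 0 - δ T ≤ δmax - δmin := by
    have h0 := hbound 0
    have hT := hbound T
    linarith [h0.2, hT.1]
  have hpos : 0 ≤ K * η * G := by positivity
  calc L (x T) (δ T) ≤ _ := main T
    _ ≤ L (x 0) (δ 0)
        - (η - β * η ^ 2 / 2) * ∑ t ∈ Finset.range T, ‖g (x t) (δ t)‖ ^ 2
        + K * η * G * (δmax - δmin) := by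
          have := mul_le_mul_of_nonneg_left hle hpos
          linarith
end

section
/- Let E be a real inner product space, L : E → ℝ → ℝ a parameterized loss, g : E → ℝ → E a parameterized gradient map, and β, K, G > 0 real numbers. Let 0 < η, let δ : ℕ → ℝ be a monotonically nonincreasing sequence with values in [δ_min, δ_max], set Δ = δ_max − δ_min, and let both strategies start from the same x_0: the E2H iterates x_{t+1}^{E2H} = x_t^{E2H} − η·g(x_t^{E2H}, δ_t) and the Fixed iterates x_{t+1}^{Fixed} = x_t^{Fixed} − η·g(x_t^{Fixed}, δ_max). Assume for every t: (i) for all x, y ∈ E and every δ ∈ {δ_t, δ_max}, L(y, δ) ≤ L(x, δ) + ⟪g(x, δ), y − x⟫ + (β/2)‖y − x‖²; (ii) L(x_{t+1}^{E2H}, δ_{t+1}) ≤ L(x_{t+1}^{E2H}, δ_t) + K·|δ_t − δ_{t+1}|·‖x_{t+1}^{E2H} − x_t^{E2H}‖; (iii) ‖g(x, δ)‖ ≤ G for all x, δ; (iv) η − βη²/2 > 0 and Σ_{t=0}^{T−1} ‖g(x_t^{E2H}, δ_t)‖² ≥ Σ_{t=0}^{T−1} ‖g(x_t^{Fixed}, δ_max)‖²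 + KGΔ/(η − βη²/2). Then L(x_T^{E2H}, δ_T) ≤ L(x_0, δ_0) − (η − βη²/2)·Σ_{t=0}^{T−1} ‖g(x_t^{Fixed}, δ_max)‖² − K·G·Δ·(1 − η). -/
open RealInnerProductSpace

/-- Key inequality chain in the proof of Theorem 1 (Superiority of E2H Strategy). -/
theorem e2h_key_inequality
    {E : Type*} [NormedAddCommGroup E] [InnerProductSpace ℝ E]
    (L : E → ℝ → ℝ) (g : E → ℝ → E) (β K G : ℝ)
    (hβ : 0 < β) (hK : 0 < K) (hG : 0 < G)
    (η : ℝ) (hη : 0 < η)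
    (δ : ℕ → ℝ) (hmono : ∀ t : ℕ, δ (t + 1) ≤ δ t)
    (δmin δmax : ℝ) (hbound : ∀ t : ℕ, δmin ≤ δ t ∧ δ t ≤ δmax)
    (x0 : E) (xE xF : ℕ → E) (hE0 : xE 0 = x0) (hF0 : xF 0 = x0)
    (hEupd : ∀ t : ℕ, xE (t + 1) = xE t - η • g (xE t) (δ t))
    (hFupd : ∀ t : ℕ, xF (t + 1) = xF t - η • g (xF t) δmax)
    (hsmooth : ∀ t : ℕ, ∀ d ∈ ({δ t, δmax} : Set ℝ), ∀ a b : E,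
      L b d ≤ L a d + ⟪g a d, b - a⟫ + (β / 2) * ‖b - a‖ ^ 2)
    (hδchange : ∀ t : ℕ,
      L (xE (t + 1)) (δ (t + 1)) ≤ L (xE (t + 1)) (δ t)
        + K * |δ t - δ (t + 1)| * ‖xE (t + 1) - xE t‖)
    (hgrad : ∀ (a : E) (d : ℝ), ‖g a d‖ ≤ G)
    (T : ℕ)
    (hstep : 0 < η - β * η ^ 2 / 2)
    (hcum : ∑ t ∈ Finset.range T, ‖g (xE t) (δ t)‖ ^ 2 ≥
      (∑ t ∈ Finset.range T, ‖g (xF t) δmax‖ ^ 2)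
        + K * G * (δmax - δmin) / (η - β * η ^ 2 / 2)) :
    L (xE T) (δ T) ≤ L x0 (δ 0)
      - (η - β * η ^ 2 / 2) * ∑ t ∈ Finset.range T, ‖g (xF t) δmax‖ ^ 2
      - K * G * (δmax - δmin) * (1 - η) := by
  set s := η - β * η ^ 2 / 2 with hs
  clear_value s
  -- Main induction: descent bound for E2H
  have key : ∀ n : ℕ, L (xE n) (δ n) ≤ L x0 (δ 0)
      - s * ∑ t ∈ Finset.range n, ‖g (xE t) (δ t)‖ ^ 2
      + K * η * G * (δ 0 - δ n) := by
    intro n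
    induction n with
    | zero => simp [hE0]
    | succ n ih =>
      have hupd := hEupd n
      have hdiff : xE (n + 1) - xE n = -(η • g (xE n) (δ n)) := by
        rw [hupd]; abel
      have hmem : δ n ∈ ({δ n, δmax} : Set ℝ) := Or.inl rfl
      have hsm := hsmooth n (δ n) hmem (xE n) (xE (n + 1))
      rw [hdiff] at hsm
      have hinner : ⟪g (xE n) (δ n), -(η • g (xE n) (δ n))⟫
          = -(η * ‖g (xE n) (δ n)‖ ^ 2) := by
        rw [inner_neg_right, inner_smul_right, real_inner_self_eq_norm_sq]
      have hnorm : ‖-(η • g (xE n) (δ n))‖ ^ 2 = η ^ 2 * ‖g (xE n) (δ n)‖ ^ 2 := by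
        rw [norm_neg, norm_smul, Real.norm_eq_abs, abs_of_pos hη, mul_pow]
      rw [hinner, hnorm] at hsm
      -- hsm : L (xE (n+1)) (δ n) ≤ L (xE n) (δ n) - η‖g‖² + β/2 η²‖g‖²
      have hδc := hδchange n
      have habs : |δ n - δ (n + 1)| = δ n - δ (n + 1) :=
        abs_of_nonneg (by linarith [hmono n])
      have hxnorm : ‖xE (n + 1) - xE n‖ = η * ‖g (xE n) (δ n)‖ := by
        rw [hdiff, norm_neg, norm_smul, Real.norm_eq_abs, abs_of_pos hη]
      rw [habs, hxnorm] at hδc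
      have hmul : K * (δ n - δ (n + 1)) * (η * ‖g (xE n) (δ n)‖)
          ≤ K * (δ n - δ (n + 1)) * (η * G) := by
        have h1 : 0 ≤ K * (δ n - δ (n + 1)) :=
          mul_nonneg hK.le (by linarith [hmono n])
        have h2 : η * ‖g (xE n) (δ n)‖ ≤ η * G :=
          mul_le_mul_of_nonneg_left (hgrad _ _) hη.le
        exact mul_le_mul_of_nonneg_left h2 h1
      rw [Finset.sum_range_succ]
      have hgsq : 0 ≤ ‖g (xE n) (δ n)‖ ^ 2 := sq_nonneg _
      have hsexp : s * ‖g (xE n) (δ n)‖ ^ 2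
          = η * ‖g (xE n) (δ n)‖ ^ 2 - β / 2 * (η ^ 2 * ‖g (xE n) (δ n)‖ ^ 2) := by
        rw [hs]; ring
      have heq : K * (δ n - δ (n + 1)) * (η * G) = K * η * G * (δ n - δ (n + 1)) := by
        ring
      nlinarith [hδc, hsm, ih, hmul, hsexp, heq]
  have hkey := key T
  -- bound the δ drift term
  have hδT : δ 0 - δ T ≤ δmax - δmin := by
    have h0 := hbound 0
    have hT := hbound T
    linarith [h0.2, hT.1]
  have hdrift : K * η * G * (δ 0 - δ T) ≤ K * η * G * (δmax - δmin) :=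
    mul_le_mul_of_nonneg_left hδT (by positivity)
  -- use the cumulative gradient advantage
  have hcum' : s * ∑ t ∈ Finset.range T, ‖g (xE t) (δ t)‖ ^ 2
      ≥ s * ∑ t ∈ Finset.range T, ‖g (xF t) δmax‖ ^ 2 + K * G * (δmax - δmin) := by
    have h := mul_le_mul_of_nonneg_left hcum hstep.le
    have hdiv : s * (K * G * (δmax - δmin) / s) = K * G * (δmax - δmin) := by
      field_simp
    calc s * ∑ t ∈ Finset.range T, ‖g (xF t) δmax‖ ^ 2 + K * G * (δmax - δmin)
        = s * ((∑ t ∈ Finset.range T, ‖g (xF t) δmax‖ ^ 2)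
            + K * G * (δmax - δmin) / s) := by rw [mul_add, hdiv]
      _ ≤ s * ∑ t ∈ Finset.range T, ‖g (xE t) (δ t)‖ ^ 2 := h
  linarith [hkey, hdrift, hcum']
end
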